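/- arXiv:1406.1087 — 2 statements merged into one kernel-verified Lean document; each statement's English description precedes it below -/
import Mathlib

section
/- If f : GF(p)^n → GF(p) is bent and weakly regular with μ-regular dual f*, then f* is bent and weakly regular with μ^{-1}-regular dual f** given by f**(x) = f(-x). Moreover, if f is also even, then f* is even and f** = f. -/
open Finset

/-- The primitive `p`-th root of unity `ζ = e^(2πi/p)`. -/
noncomputable def zeta (p : ℕ) : ℂ := Complex.exp (2 * Real.pi * Complex.I / p)

/-- The Walsh transform of `f : GF(p)^n → GF(p)`. -/
noncomputable def walsh (p n : ℕ) [NeZero p] (f : (Fin n → ZMod p) → ZMod p)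
    (u : Fin n → ZMod p) : ℂ :=
  ∑ x : Fin n → ZMod p, zeta p ^ (f x - ∑ i, u i * x i).val

/-! The Walsh transform is the Fourier transform of `ζ^f` on `GF(p)^n`, so it inverts:
`∑ₓ W_g(x) ζ^(-⟨u,x⟩) = pⁿ ζ^(g(-u))`, by orthogonality of the characters `x ↦ ζ^⟨c,x⟩`.
Weak regularity says `ζ^(f*(x)) = W_f(x) / (μ p^(n/2))`; inserting this into `W_{f*}(u)` and
inverting gives `W_{f*}(u) = μ⁻¹ ζ^(f(-u)) p^(n/2)`, using `(p^(n/2))² = pⁿ`. If `f` is even then so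
is `W_f`, and `f*` is even because `ζ` is a primitive `p`-th root of unity, so `W_f` determines
`f*`. -/

open Matrix

theorem isPrimitiveRoot_zeta (p : ℕ) [NeZero p] : IsPrimitiveRoot (zeta p) p :=
  Complex.isPrimitiveRoot_exp p (NeZero.ne p)

theorem norm_zeta (p : ℕ) [NeZero p] : ‖zeta p‖ = 1 :=
  (isPrimitiveRoot_zeta p).norm'_eq_one (NeZero.ne p)

noncomputable def zetaChar (p : ℕ) [NeZero p] : AddChar (ZMod p) ℂ :=
  AddChar.zmodChar p (isPrimitiveRoot_zeta p).pow_eq_one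

theorem zetaChar_apply (p : ℕ) [NeZero p] (a : ZMod p) : zetaChar p a = zeta p ^ a.val := rfl

theorem zetaChar_isPrimitive (p : ℕ) [NeZero p] : (zetaChar p).IsPrimitive :=
  AddChar.zmodChar_primitive_of_primitive_root p (isPrimitiveRoot_zeta p)

theorem zetaChar_injective (p : ℕ) [NeZero p] : Function.Injective (zetaChar p) := fun a b h =>
  ZMod.val_injective p <| (isPrimitiveRoot_zeta p).pow_inj (ZMod.val_lt a) (ZMod.val_lt b) h

theorem walsh_eq_sum_zetaChar (p n : ℕ) [NeZero p] (g : (Fin n → ZMod p) → ZMod p)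
    (u : Fin n → ZMod p) : walsh p n g u = ∑ x, zetaChar p (g x - u ⬝ᵥ x) := rfl

theorem AddChar.sum_apply_dotProduct {R R' ι : Type*} [CommRing R] [Fintype R] [DecidableEq R]
    [CommRing R'] [IsDomain R'] [Fintype ι] [DecidableEq ι] {ψ : AddChar R R'}
    (hψ : ψ.IsPrimitive) (c : ι → R) :
    ∑ x : ι → R, ψ (c ⬝ᵥ x) = if c = 0 then (Fintype.card R : R') ^ Fintype.card ι else 0 := by
  split_ifs with hc
  · simp [hc]
  obtain ⟨i, hi⟩ := Function.ne_iff.mp hc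
  obtain ⟨a, ha⟩ := AddChar.ne_one_iff.mp (hψ hi)
  let χ : AddChar (ι → R) R' := ψ.compAddMonoidHom (AddMonoidHom.mk' (c ⬝ᵥ ·) (dotProduct_add c))
  have hχ : χ ≠ 1 := AddChar.ne_one_iff.mpr ⟨Pi.single i a, by
    simpa [χ, dotProduct_single, mul_comm] using ha⟩
  exact AddChar.sum_eq_zero_of_ne_one hχ

theorem sum_zetaChar_dotProduct (p n : ℕ) [NeZero p] (c : Fin n → ZMod p) :
    ∑ x, zetaChar p (c ⬝ᵥ x) = if c = 0 then (p : ℂ) ^ n else 0 := by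
  simpa using AddChar.sum_apply_dotProduct (zetaChar_isPrimitive p) c

theorem sum_walsh_mul_zetaChar (p n : ℕ) [NeZero p] (g : (Fin n → ZMod p) → ZMod p)
    (u : Fin n → ZMod p) :
    ∑ x, walsh p n g x * zetaChar p (-(u ⬝ᵥ x)) = (p : ℂ) ^ n * zetaChar p (g (-u)) := by
  have hterm : ∀ x y, zetaChar p (g y - x ⬝ᵥ y) * zetaChar p (-(u ⬝ᵥ x)) =
      zetaChar p (g y) * zetaChar p (-(y + u) ⬝ᵥ x) := fun x y => by
    rw [← AddChar.map_add_eq_mul, ← AddChar.map_add_eq_mul, neg_dotProduct, add_dotProduct,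
      dotProduct_comm x y]
    ring_nf
  calc ∑ x, walsh p n g x * zetaChar p (-(u ⬝ᵥ x))
      = ∑ y, zetaChar p (g y) * ∑ x, zetaChar p (-(y + u) ⬝ᵥ x) := by
        simp_rw [walsh_eq_sum_zetaChar, Finset.sum_mul, hterm]
        rw [Finset.sum_comm]
        simp_rw [← Finset.mul_sum]
    _ = (p : ℂ) ^ n * zetaChar p (g (-u)) := by
        simp_rw [sum_zetaChar_dotProduct, neg_eq_zero, add_eq_zero_iff_eq_neg, mul_ite,
          mul_zero, Finset.sum_ite_eq', Finset.mem_univ, if_true]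
        exact mul_comm _ _

theorem walsh_neg_of_even (p n : ℕ) [NeZero p] {g : (Fin n → ZMod p) → ZMod p}
    (hg : ∀ x, g (-x) = g x) (u : Fin n → ZMod p) : walsh p n g (-u) = walsh p n g u := by
  simp_rw [walsh_eq_sum_zetaChar]
  refine Fintype.sum_equiv (Equiv.neg _) _ _ fun x => ?_
  simp [hg, neg_dotProduct, dotProduct_neg]

def IsWeaklyRegularDual (p n : ℕ) [NeZero p] (f fstar : (Fin n → ZMod p) → ZMod p) (μ : ℂ) :
    Prop :=
  ∀ u, walsh p n f u = μ * zeta p ^ (fstar u).val * ((p : ℝ) ^ ((n : ℝ) / 2) : ℝ)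

theorem sq_rpow_div_two (p n : ℕ) : (((p : ℝ) ^ ((n : ℝ) / 2) : ℝ) : ℂ) ^ 2 = (p : ℂ) ^ n := by
  have h : ((p : ℝ) ^ ((n : ℝ) / 2)) ^ 2 = (p : ℝ) ^ n := by
    rw [Real.rpow_div_two_eq_sqrt _ p.cast_nonneg, Real.rpow_natCast, ← pow_mul, mul_comm,
      pow_mul, Real.sq_sqrt p.cast_nonneg]
  exact_mod_cast h

theorem ofReal_rpow_div_two_ne_zero (p n : ℕ) [NeZero p] :
    (((p : ℝ) ^ ((n : ℝ) / 2) : ℝ) : ℂ) ≠ 0 :=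
  Complex.ofReal_ne_zero.mpr (Real.rpow_pos_of_pos (mod_cast NeZero.pos p) _).ne'

theorem IsWeaklyRegularDual.dual {p n : ℕ} [NeZero p] {f fstar : (Fin n → ZMod p) → ZMod p}
    {μ : ℂ} (h : IsWeaklyRegularDual p n f fstar μ) (hμ : μ ≠ 0) :
    IsWeaklyRegularDual p n fstar (fun x => f (-x)) μ⁻¹ := by
  intro u
  have hC := ofReal_rpow_div_two_ne_zero p n
  have hC2 := sq_rpow_div_two p n
  unfold IsWeaklyRegularDual at h
  generalize (((p : ℝ) ^ ((n : ℝ) / 2) : ℝ) : ℂ) = C at h hC hC2 ⊢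
  have hfstar : ∀ x, zetaChar p (fstar x) = (μ * C)⁻¹ * walsh p n f x := fun x => by
    rw [h x, zetaChar_apply]
    field_simp
  calc walsh p n fstar u
      = (μ * C)⁻¹ * ∑ x, walsh p n f x * zetaChar p (-(u ⬝ᵥ x)) := by
        rw [walsh_eq_sum_zetaChar, Finset.mul_sum]
        simp_rw [sub_eq_add_neg, AddChar.map_add_eq_mul, hfstar, mul_assoc]
    _ = μ⁻¹ * zeta p ^ (f (-u)).val * C := by
        rw [sum_walsh_mul_zetaChar, ← hC2, zetaChar_apply]
        field_simp

theorem IsWeaklyRegularDual.dual_eq_of_walsh_eq {p n : ℕ} [NeZero p]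
    {f fstar : (Fin n → ZMod p) → ZMod p} {μ : ℂ} (h : IsWeaklyRegularDual p n f fstar μ)
    (hμ : μ ≠ 0) {u v : Fin n → ZMod p} (huv : walsh p n f u = walsh p n f v) :
    fstar u = fstar v := by
  rw [h u, h v] at huv
  exact zetaChar_injective p <|
    mul_left_cancel₀ hμ (mul_right_cancel₀ (ofReal_rpow_div_two_ne_zero p n) huv)

theorem IsWeaklyRegularDual.norm_walsh {p n : ℕ} [NeZero p]
    {f fstar : (Fin n → ZMod p) → ZMod p} {μ : ℂ} (h : IsWeaklyRegularDual p n f fstar μ)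
    (hμ : ‖μ‖ = 1) (u : Fin n → ZMod p) : ‖walsh p n f u‖ = (p : ℝ) ^ ((n : ℝ) / 2) := by
  rw [h u, norm_mul, norm_mul, hμ, norm_pow, norm_zeta, Complex.norm_real,
    Real.norm_of_nonneg (by positivity), one_pow, one_mul, one_mul]

theorem dual_of_weakly_regular_bent_general (p n : ℕ) [NeZero p]
    (f fstar : (Fin n → ZMod p) → ZMod p) (μ : ℂ) (hμ : ‖μ‖ = 1)
    (hdual : ∀ u, walsh p n f u = μ * zeta p ^ (fstar u).val * ((p : ℝ) ^ ((n : ℝ) / 2) : ℝ)) :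
    (∀ u, ‖walsh p n fstar u‖ = (p : ℝ) ^ ((n : ℝ) / 2)) ∧
    (∀ u, walsh p n fstar u =
        μ⁻¹ * zeta p ^ (f (-u)).val * ((p : ℝ) ^ ((n : ℝ) / 2) : ℝ)) ∧
    ((∀ x, f (-x) = f x) →
        (∀ x, fstar (-x) = fstar x) ∧ (fun x => f (-x)) = f) := by
  have hμ0 : μ ≠ 0 := norm_ne_zero_iff.mp (hμ ▸ one_ne_zero)
  have hdual' : IsWeaklyRegularDual p n fstar (fun x => f (-x)) μ⁻¹ :=
    IsWeaklyRegularDual.dual hdual hμ0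
  have hμ' : ‖μ⁻¹‖ = 1 := by rw [norm_inv, hμ, inv_one]
  refine ⟨hdual'.norm_walsh hμ', hdual', fun heven => ⟨fun x => ?_, funext heven⟩⟩
  exact IsWeaklyRegularDual.dual_eq_of_walsh_eq hdual hμ0 (walsh_neg_of_even p n heven x)

/-- If `f` is bent and weakly regular with `μ`-regular dual `f*`, then `f*` is
bent and weakly regular with `μ⁻¹`-regular dual `f**` given by `f**(x) = f(-x)`.
If moreover `f` is even, then `f*` is even and `f** = f`. -/
theorem dual_of_weakly_regular_bent (p n : ℕ) (hp : p.Prime) [NeZero p]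
    (f fstar : (Fin n → ZMod p) → ZMod p) (μ : ℂ) (hμ : ‖μ‖ = 1)
    (hbent : ∀ u, ‖walsh p n f u‖ = (p : ℝ) ^ ((n : ℝ) / 2))
    (hdual : ∀ u, walsh p n f u = μ * zeta p ^ (fstar u).val * ((p : ℝ) ^ ((n : ℝ) / 2) : ℝ)) :
    (∀ u, ‖walsh p n fstar u‖ = (p : ℝ) ^ ((n : ℝ) / 2)) ∧
    (∀ u, walsh p n fstar u =
        μ⁻¹ * zeta p ^ (f (-u)).val * ((p : ℝ) ^ ((n : ℝ) / 2) : ℝ)) ∧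
    ((∀ x, f (-x) = f x) →
        (∀ x, fstar (-x) = fstar x) ∧ (fun x => f (-x)) = f) :=
  dual_of_weakly_regular_bent_general p n f fstar μ hμ hdual
end

section
/- If D is a (v,k,λ,μ)-partial difference set in a finite abelian group G with D = D^{-1} and 1 ∉ D, then the complement D' = G ∖ (D ∪ {1}) is a (v, k', λ', μ')-partial difference set with k' = v - k - 1, λ' = v - 2k - 2 + μ, and μ' = v - 2k + λ. -/
open Finset

/-- The number of ways to write `g` as a difference `d₁ * d₂⁻¹` with `d₁, d₂ ∈ D`. -/
def diffCount {G : Type*} [Group G] [DecidableEq G] (D : Finset G) (g : G) : ℕ :=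
  ((D ×ˢ D).filter (fun q => q.1 * q.2⁻¹ = g)).card

lemma diffCount_eq_card_filter {G : Type*} [Group G] [DecidableEq G] (A : Finset G) (g : G) :
    diffCount A g = (A.filter fun a => g⁻¹ * a ∈ A).card := by
  apply Finset.card_bij' (fun p _ => p.1) (fun a _ => (a, g⁻¹ * a))
  · rintro ⟨a, b⟩ hp
    simp only [Finset.mem_filter, Finset.mem_product] at hp ⊢
    obtain ⟨⟨ha, hb⟩, he⟩ := hp
    have : b = g⁻¹ * a := by
      rw [← he]; group
    exact ⟨ha, this ▸ hb⟩
  · intro a ha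
    simp only [Finset.mem_filter] at ha ⊢
    refine ⟨Finset.mem_product.mpr ⟨ha.1, ha.2⟩, by group⟩
  · rintro ⟨a, b⟩ hp
    simp only [Finset.mem_filter, Finset.mem_product] at hp
    have : b = g⁻¹ * a := by rw [← hp.2]; group
    simp [this]
  · intro a ha; rfl

lemma card_filter_shift {G : Type*} [Group G] [Fintype G] [DecidableEq G] (B : Finset G) (g : G) :
    (Finset.univ.filter fun a : G => g⁻¹ * a ∈ B).card = B.card := by
  have : (Finset.univ.filter fun a : G => g⁻¹ * a ∈ B)
      = B.map ⟨(g * ·), mul_right_injective g⟩ := by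
    ext a
    simp only [Finset.mem_filter, Finset.mem_univ, true_and, Finset.mem_map,
      Function.Embedding.coeFn_mk]
    constructor
    · intro h; exact ⟨g⁻¹ * a, h, by group⟩
    · rintro ⟨b, hb, rfl⟩; simpa using hb
  rw [this, Finset.card_map]

lemma incl_excl {G : Type*} [Fintype G] [DecidableEq G] (p q : G → Prop)
    [DecidablePred p] [DecidablePred q] :
    ((Finset.univ.filter fun a => ¬ p a ∧ ¬ q a).card : ℤ)
      = Fintype.card G - (Finset.univ.filter p).card - (Finset.univ.filter q).card
        + (Finset.univ.filter fun a => p a ∧ q a).card := by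
  classical
  have h1 : (Finset.univ.filter fun a => ¬ p a ∧ ¬ q a)
      = Finset.univ \ (Finset.univ.filter fun a => p a ∨ q a) := by
    ext a; simp [not_or]
  have h2 : ((Finset.univ.filter fun a => p a ∨ q a).card : ℤ)
      = (Finset.univ.filter p).card + (Finset.univ.filter q).card
        - (Finset.univ.filter fun a => p a ∧ q a).card := by
    have := Finset.card_union_add_card_inter (Finset.univ.filter p) (Finset.univ.filter q)
    rw [Finset.filter_or, Finset.filter_and]
    omega
  rw [h1, Finset.card_sdiff_of_subset (Finset.subset_univ _)]
  have hle : (Finset.univ.filter fun a => p a ∨ q a).card ≤ Fintype.card G := by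
    simpa using Finset.card_filter_le Finset.univ (fun a => p a ∨ q a)
  push_cast [Finset.card_univ]
  omega

lemma step_count {G : Type*} [Group G] [DecidableEq G] (D : Finset G)
    (h1 : (1 : G) ∉ D) (g : G) (hg : g ≠ 1) :
    ((insert 1 D).filter fun a => g⁻¹ * a ∈ insert 1 D).card
      = (D.filter fun a => g⁻¹ * a ∈ D).card
        + (if g ∈ D then 1 else 0) + (if g⁻¹ ∈ D then 1 else 0) := by
  rw [Finset.filter_insert]
  have hsplit : D.filter (fun a => g⁻¹ * a ∈ insert 1 D)
      = (D.filter fun a => g⁻¹ * a ∈ D) ∪ (D.filter fun a => a = g) := by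
    ext a
    simp only [Finset.mem_filter, Finset.mem_insert, Finset.mem_union, inv_mul_eq_one]
    constructor
    · rintro ⟨ha, h | h⟩
      · exact Or.inr ⟨ha, h.symm⟩
      · exact Or.inl ⟨ha, h⟩
    · rintro (⟨ha, h⟩ | ⟨ha, h⟩)
      · exact ⟨ha, Or.inr h⟩
      · exact ⟨ha, Or.inl h.symm⟩
  have hdisj : Disjoint (D.filter fun a => g⁻¹ * a ∈ D) (D.filter fun a => a = g) := by
    rw [Finset.disjoint_filter]
    rintro a hmem hp heq
    subst heq
    exact h1 (by simpa using hp)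
  have hcard2 : (D.filter fun a => a = g).card = if g ∈ D then 1 else 0 := by
    rw [Finset.filter_eq']
    split <;> simp
  have hQ1 : (g⁻¹ * 1 ∈ insert 1 D) ↔ g⁻¹ ∈ D := by
    simp [inv_eq_one, hg]
  by_cases hgi : g⁻¹ ∈ D
  · rw [if_pos (hQ1.mpr hgi), Finset.card_insert_of_notMem (fun h => h1 (Finset.mem_filter.mp h).1),
      hsplit, Finset.card_union_of_disjoint hdisj, hcard2, if_pos hgi]
  · rw [if_neg (fun h => hgi (hQ1.mp h)), hsplit, Finset.card_union_of_disjoint hdisj, hcard2,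
      if_neg hgi]
    omega

lemma compl_diffCount {G : Type*} [CommGroup G] [Fintype G] [DecidableEq G]
    (D : Finset G) (h1 : (1 : G) ∉ D) (g : G) (hg : g ≠ 1) :
    (diffCount (Finset.univ \ insert 1 D) g : ℤ)
      = (Fintype.card G : ℤ) - 2 * (D.card + 1) + diffCount D g
        + (if g ∈ D then 1 else 0) + (if g⁻¹ ∈ D then 1 else 0) := by
  set B := insert (1 : G) D with hB
  have hfilter : ((Finset.univ \ B).filter fun a => g⁻¹ * a ∈ Finset.univ \ B)
      = Finset.univ.filter fun a => ¬ (a ∈ B) ∧ ¬ (g⁻¹ * a ∈ B) := by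
    ext a; simp [Finset.mem_sdiff, and_comm]
  rw [diffCount_eq_card_filter, hfilter, incl_excl]
  have e1 : Finset.univ.filter (fun a : G => a ∈ B) = B := by
    ext a; simp
  have e2 := card_filter_shift B g
  have e3 : (Finset.univ.filter fun a : G => a ∈ B ∧ g⁻¹ * a ∈ B)
      = B.filter fun a => g⁻¹ * a ∈ B := by
    ext a; simp [and_comm]
  rw [e1, e2, e3, step_count D h1 g hg, diffCount_eq_card_filter]
  have hBcard : B.card = D.card + 1 := Finset.card_insert_of_notMem h1
  rw [hBcard]
  push_cast
  ring

/-- The complement `D' = G ∖ (D ∪ {1})` of a `(v,k,λ,μ)`-partial difference set `D`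
with `1 ∉ D` and `D = D⁻¹` is a `(v, v-k-1, v-2k-2+μ, v-2k+λ)`-partial difference set. -/
theorem complement_pds {G : Type*} [CommGroup G] [Fintype G] [DecidableEq G]
    (D : Finset G) (v k lambda mu : ℕ)
    (hv : Fintype.card G = v) (hk : D.card = k)
    (h1 : (1 : G) ∉ D) (hinv : ∀ d ∈ D, d⁻¹ ∈ D)
    (hlam : ∀ g ∈ D, g ≠ 1 → diffCount D g = lambda)
    (hmu : ∀ g : G, g ∉ D → g ≠ 1 → diffCount D g = mu) :
    (1 : G) ∉ Finset.univ \ insert 1 D ∧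
    (∀ d ∈ Finset.univ \ insert 1 D, d⁻¹ ∈ Finset.univ \ insert 1 D) ∧
    ((Finset.univ \ insert 1 D).card : ℤ) = (v : ℤ) - k - 1 ∧
    (∀ g ∈ Finset.univ \ insert 1 D, g ≠ 1 →
      (diffCount (Finset.univ \ insert 1 D) g : ℤ) = (v : ℤ) - 2 * k - 2 + mu) ∧
    (∀ g : G, g ∉ Finset.univ \ insert 1 D → g ≠ 1 →
      (diffCount (Finset.univ \ insert 1 D) g : ℤ) = (v : ℤ) - 2 * k + lambda) := by
  have hksub : k + 1 ≤ v := by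
    rw [← hv, ← hk, ← Finset.card_insert_of_notMem h1, ← Finset.card_univ]
    exact Finset.card_le_card (Finset.subset_univ _)
  refine ⟨by simp, ?_, ?_, ?_, ?_⟩
  · intro d hd
    simp only [Finset.mem_sdiff, Finset.mem_univ, true_and, Finset.mem_insert, not_or] at hd ⊢
    refine ⟨fun h => hd.1 (by rw [← inv_inv d, h, inv_one]), fun h => hd.2 ?_⟩
    have := hinv _ h
    rwa [inv_inv] at this
  · rw [Finset.card_sdiff_of_subset (Finset.subset_univ _), Finset.card_univ, hv,
      Finset.card_insert_of_notMem h1, hk]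
    push_cast [Nat.cast_sub hksub]
    ring
  · intro g hg hg1
    simp only [Finset.mem_sdiff, Finset.mem_univ, true_and, Finset.mem_insert, not_or] at hg
    have hgi : g⁻¹ ∉ D := fun h => hg.2 (by simpa using hinv _ h)
    rw [compl_diffCount D h1 g hg1, hmu g hg.2 hg1, if_neg hg.2, if_neg hgi, hv, hk]
    ring
  · intro g hg hg1
    simp only [Finset.mem_sdiff, Finset.mem_univ, true_and, Finset.mem_insert, not_or,
      not_and, not_not] at hg
    have hgD : g ∈ D := by
      rcases hg (fun h => absurd h (by simp [hg1])) with h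
      exact h
    have hgi : g⁻¹ ∈ D := hinv _ hgD
    rw [compl_diffCount D h1 g hg1, hlam g hgD hg1, if_pos hgD, if_pos hgi, hv, hk]
    ring
end
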